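/- arXiv:1612.06419 — 7 statements merged into one kernel-verified Lean document; each statement's English description precedes it below -/
import Mathlib

section
/- Let f ∈ L^1([0,1]) and C ∈ ℕ. If for all x, y ∈ ℝ with |x − y| ≤ 2^{−(n+C)} one has |∫_{[x,y]} f̃ dλ| < 2^{−n} for every n ∈ ℕ (where f̃ is the extension of f by zero to ℝ), then f ∈ L^∞([0,1]) with ‖f‖_∞ ≤ 2^C. -/
/-!
By the Lebesgue differentiation theorem, almost every `f x` is the limit of the averages of `f`
over `[x - r, x + r]` with `r = 2^-(n+C+1)`. That interval has length `2^-(n+C)`, so the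
hypothesis bounds each average by `2^-n / 2^-(n+C) = 2^C`.
-/

open MeasureTheory Filter Topology Metric Set

theorem ae_norm_le_of_norm_average_closedBall_le {α E ι : Type*} [PseudoMetricSpace α]
    [MeasurableSpace α] [SecondCountableTopology α] [BorelSpace α] {μ : Measure α}
    [IsLocallyFiniteMeasure μ] [IsUnifLocDoublingMeasure μ]
    [NormedAddCommGroup E] [NormedSpace ℝ E] [CompleteSpace E] {f : α → E}
    (hf : LocallyIntegrable f μ) {l : Filter ι} [l.NeBot] {r : ι → ℝ}
    (hr : Tendsto r l (𝓝[>] 0)) {M : ℝ}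
    (hM : ∀ x, ∀ᶠ i in l, ‖⨍ y in closedBall x (r i), f y ∂μ‖ ≤ M) :
    ∀ᵐ x ∂μ, ‖f x‖ ≤ M := by
  filter_upwards [IsUnifLocDoublingMeasure.ae_tendsto_average μ hf 1] with x hx
  have hcenter : ∀ᶠ i in l, x ∈ closedBall x (1 * r i) :=
    (hr.eventually self_mem_nhdsWithin).mono fun i hi => by
      simpa using le_of_lt (show (0 : ℝ) < r i from hi)
  exact le_of_tendsto (hx (fun _ => x) r hr hcenter).norm (hM x)

theorem Real.setAverage_closedBall_eq (f : ℝ → ℝ) {r : ℝ} (x : ℝ) (hr : 0 < r) :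
    ⨍ y in closedBall x r, f y = (2 * r)⁻¹ * ∫ t in uIcc (x - r) (x + r), f t := by
  rw [setAverage_eq, measureReal_def, Real.volume_closedBall,
    ENNReal.toReal_ofReal (by positivity), Real.closedBall_eq_Icc,
    uIcc_of_le (by linarith), smul_eq_mul]

theorem stmt2_general (f : ℝ → ℝ)
    (hint : Integrable f) (C : ℕ)
    (hmod : ∀ n : ℕ, ∀ x y : ℝ, |x - y| ≤ (2:ℝ) ^ (-((n : ℤ) + C)) →
      |∫ t in Set.uIcc x y, f t| < (2:ℝ) ^ (-(n : ℤ))) :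
    eLpNorm f ⊤ volume ≤ 2 ^ C := by
  set r : ℕ → ℝ := fun n => (2:ℝ) ^ (-((n : ℤ) + C + 1))
  have hr : Tendsto r atTop (𝓝[>] 0) := by
    refine ((tendsto_pow_atTop_nhdsWithin_zero_of_lt_one (r := (2:ℝ)⁻¹) (by norm_num)
      (by norm_num)).comp (tendsto_add_atTop_nat (C + 1))).congr fun n => ?_
    show (2:ℝ)⁻¹ ^ (n + (C + 1)) = 2 ^ (-((n : ℤ) + C + 1))
    rw [inv_pow, ← zpow_natCast, ← zpow_neg]
    push_cast; ring_nf
  have hdiam (n : ℕ) : 2 * r n = (2:ℝ) ^ (-((n : ℤ) + C)) := by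
    rw [← zpow_one_add₀ two_ne_zero]; ring_nf
  have hbound (n : ℕ) (x : ℝ) : ‖⨍ y in closedBall x (r n), f y‖ ≤ 2 ^ C := by
    have hinterval := hmod n (x - r n) (x + r n) (by
      rw [← hdiam, show x - r n - (x + r n) = -(2 * r n) by ring, abs_neg,
        abs_of_pos (by positivity)])
    rw [Real.setAverage_closedBall_eq f x (by positivity), norm_mul, Real.norm_eq_abs,
      Real.norm_eq_abs, abs_inv, abs_of_pos (by positivity), hdiam, ← div_eq_inv_mul,
      div_le_iff₀ (by positivity),
      ← zpow_natCast, ← zpow_add₀ two_ne_zero]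
    exact hinterval.le.trans_eq (by ring_nf)
  calc eLpNorm f ⊤ volume ≤ ENNReal.ofReal (2 ^ C) :=
        eLpNorm_exponent_top.trans_le <| eLpNormEssSup_le_of_ae_bound <|
          ae_norm_le_of_norm_average_closedBall_le hint.locallyIntegrable hr
            fun x => Eventually.of_forall fun n => hbound n x
    _ = 2 ^ C := by rw [ENNReal.ofReal_pow zero_le_two, ENNReal.ofReal_ofNat]

/-- If n ↦ n + C is a singularity modulus of f ∈ L¹([0,1]) (extended by zero),
then f ∈ L^∞ with ‖f‖_∞ ≤ 2^C. -/
theorem stmt2 (f : ℝ → ℝ) (hsupp : ∀ x, x ∉ Set.Icc (0:ℝ) 1 → f x = 0)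
    (hint : Integrable f) (C : ℕ)
    (hmod : ∀ n : ℕ, ∀ x y : ℝ, |x - y| ≤ (2:ℝ) ^ (-((n : ℤ) + C)) →
      |∫ t in Set.uIcc x y, f t| < (2:ℝ) ^ (-(n : ℤ))) :
    eLpNorm f ⊤ volume ≤ 2 ^ C :=
  stmt2_general f hint C hmod
end

section
/- Let Ω ⊆ ℝ^d be bounded and measurable with λ(Ω) > 0, 1 ≤ p < ∞, f ∈ L^p(Ω), and let μ be an L^p-modulus of f. Then for every i ∈ {1,…,d}, the map n ↦ μ(n + 1 + ⌈log₂ λ(Ω)⌉ + (d−1)⌈log₂ diam(Ω)⌉) is a singularity modulus of the function f_i obtained from f̃ by integrating over all variables except the i-th: more precisely, for all x ∈ ℝ and |h| ≤ 2^{−μ(n + 1 + log₂ λ(Ω) + (d−1) log₂ diam(Ω))} one has |∫_x^{x+h} f_i(t) dt| < 2^{−n}. -/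
open MeasureTheory Set Function
open scoped ENNReal

/-!
Put `a = min x (x + h)`, `b = max x (x + h)` and `v = |h| eᵢ`. By Fubini, `∫_a^b f_i` is the
integral of `f̃` over the slab `{a < zᵢ ≤ b}`, the difference of the half-space `{zᵢ ≤ b}` and its
translate `{zᵢ ≤ a}` by `-v`; hence it equals `∫_{zᵢ ≤ a} (f̃(z + v) - f̃(z)) dz` and is at most
`‖f̃ - τ_v f̃‖₁`. The function `f̃ - τ_v f̃` lives on `Ω ∪ (Ω - v)`, of measure at most
`2λ(Ω) ≤ 2^(1 + ⌈log₂ λ(Ω)⌉)`, so Hölder's inequality bounds this `L¹` norm by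
`2^(1 + ⌈log₂ λ(Ω)⌉) ‖f̃ - τ_v f̃‖_p`.
-/

theorem Real.le_two_pow_ceil_logb_toNat {x : ℝ} (hx : 0 ≤ x) :
    x ≤ 2 ^ ⌈Real.logb 2 x⌉.toNat :=
  calc x ≤ (2 : ℝ) ^ Int.clog 2 x := mod_cast Int.self_le_zpow_clog one_lt_two x
    _ = 2 ^ ⌈Real.logb 2 x⌉ := by rw [← Nat.cast_ofNat, Real.ceil_logb_natCast hx]
    _ ≤ 2 ^ (⌈Real.logb 2 x⌉.toNat : ℤ) := zpow_le_zpow_right₀ one_le_two (Int.self_le_toNat _)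
    _ = 2 ^ ⌈Real.logb 2 x⌉.toNat := zpow_natCast _ _

theorem ENNReal.two_mul_rpow_le_two_pow_ceil_logb {x : ℝ≥0∞} (hx : x ≠ ∞) {r : ℝ}
    (hr₀ : 0 ≤ r) (hr₁ : r ≤ 1) :
    (2 * x) ^ r ≤ ENNReal.ofReal (2 ^ (⌈Real.logb 2 x.toReal⌉.toNat + 1)) := by
  set A := ⌈Real.logb 2 x.toReal⌉.toNat
  have hxc : 2 * x ≤ ENNReal.ofReal (2 ^ (A + 1)) := by
    rw [pow_succ', ENNReal.ofReal_mul zero_le_two, ENNReal.ofReal_ofNat,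
      ← ENNReal.ofReal_toReal hx]
    gcongr
    exact Real.le_two_pow_ceil_logb_toNat ENNReal.toReal_nonneg
  calc (2 * x) ^ r ≤ ENNReal.ofReal (2 ^ (A + 1)) ^ r := ENNReal.rpow_le_rpow hxc hr₀
    _ ≤ ENNReal.ofReal (2 ^ (A + 1)) ^ (1 : ℝ) :=
        ENNReal.rpow_le_rpow_of_exponent_le (ENNReal.one_le_ofReal.2 (one_le_pow₀ one_le_two)) hr₁
    _ = ENNReal.ofReal (2 ^ (A + 1)) := ENNReal.rpow_one _

theorem ENNReal.one_sub_one_div_toReal_nonneg {p : ℝ≥0∞} (hp : 1 ≤ p) :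
    0 ≤ 1 - 1 / p.toReal := by
  rcases eq_or_ne p ∞ with rfl | hp_top
  · simp
  · exact sub_nonneg.2 (div_le_one_of_le₀ (by simpa using ENNReal.toReal_mono hp_top hp)
      ENNReal.toReal_nonneg)

section LpSupport

variable {α E : Type*} {m : MeasurableSpace α} {μ : Measure α} [NormedAddCommGroup E]

theorem MeasureTheory.eLpNorm_le_eLpNorm_mul_rpow_measure_of_support_subset {p q : ℝ≥0∞}
    (hpq : p ≤ q) {f : α → E} (hf : AEStronglyMeasurable f μ) {s : Set α}
    (hfs : support f ⊆ s) :
    eLpNorm f p μ ≤ eLpNorm f q μ * μ s ^ (1 / p.toReal - 1 / q.toReal) := by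
  have := eLpNorm_le_eLpNorm_mul_rpow_measure_univ hpq (hf.restrict (s := s))
  rwa [Measure.restrict_apply_univ, eLpNorm_restrict_eq_of_support_subset hfs,
    eLpNorm_restrict_eq_of_support_subset hfs] at this

theorem MeasureTheory.MemLp.integrable_of_support_subset {p : ℝ≥0∞} (hp : 1 ≤ p) {f : α → E}
    (hf : MemLp f p μ) {s : Set α} (hfs : support f ⊆ s) (hs : μ s ≠ ∞) : Integrable f μ :=
  have : IsFiniteMeasure (μ.restrict s) := isFiniteMeasure_restrict.2 hs
  (integrableOn_iff_integrable_of_support_subset hfs).1 ((hf.restrict s).integrable hp)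

end LpSupport

section Slices

variable {ι E : Type*} [Fintype ι] [DecidableEq ι] [NormedAddCommGroup E] [NormedSpace ℝ E]

def MeasurableEquiv.funSplitAt (i : ι) (α : Type*) [MeasurableSpace α] :
    (ι → α) ≃ᵐ α × ({j // j ≠ i} → α) :=
  (piEquivPiSubtypeProd (fun _ => α) (· = i)).trans
    ((funUnique {j // j = i} α).prodCongr (.refl _))

theorem MeasureTheory.volume_preserving_funSplitAt (i : ι) (α : Type*) [MeasureSpace α]
    [SigmaFinite (volume : Measure α)] :
    MeasurePreserving (MeasurableEquiv.funSplitAt i α) := by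
  refine (volume_preserving_piEquivPiSubtypeProd (fun _ : ι => α) (· = i)).trans ?_
  convert (volume_preserving_funUnique {j // j = i} α).prod
    (.id (volume : Measure ({j // ¬ j = i} → α))) using 2
  · rfl
  -- the two sides put different (equal) `Fintype` instances on `{j // j = i}`
  all_goals
    show Measure.prod _ _ = Measure.prod _ _
    congr 3
  exact Subsingleton.elim _ _

theorem MeasureTheory.integral_eq_integral_integral_dite {α : Type*} [MeasureSpace α]
    [SigmaFinite (volume : Measure α)] (i : ι) {f : (ι → α) → E} (hf : Integrable f) :
    ∫ z, f z =
      ∫ t, ∫ y : {j // j ≠ i} → α, f (fun j => if hj : j = i then t else y ⟨j, hj⟩) := by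
  have e := volume_preserving_funSplitAt i α
  rw [← e.symm.integral_comp', Measure.volume_eq_prod]
  exact integral_prod _ ((e.symm.integrable_comp_emb (MeasurableEquiv.measurableEmbedding _)).2 hf)

theorem MeasureTheory.setIntegral_integral_dite_eq {α : Type*} [MeasureSpace α]
    [SigmaFinite (volume : Measure α)] (i : ι) {f : (ι → α) → E} (hf : Integrable f)
    {s : Set α} (hs : MeasurableSet s) :
    ∫ t in s, ∫ y : {j // j ≠ i} → α, f (fun j => if hj : j = i then t else y ⟨j, hj⟩) =
      ∫ z in (fun z => z i) ⁻¹' s, f z := by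
  have hsi : MeasurableSet ((fun z : ι → α => z i) ⁻¹' s) := measurable_pi_apply i hs
  rw [← integral_indicator hsi, integral_eq_integral_integral_dite i (hf.indicator hsi),
    ← integral_indicator hs]
  congr 1 with t
  by_cases ht : t ∈ s <;> simp [ht]

theorem MeasureTheory.norm_setIntegral_eval_preimage_Ioc_le (i : ι) {f : (ι → ℝ) → E}
    (hf : Integrable f) {a b : ℝ} (hab : a ≤ b) :
    ‖∫ z in (fun z => z i) ⁻¹' Ioc a b, f z‖ ≤ ∫ z, ‖f z - f (z + Pi.single i (b - a))‖ := by
  set v : ι → ℝ := Pi.single i (b - a)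
  set P : ℝ → Set (ι → ℝ) := fun c => (fun z => z i) ⁻¹' Iic c
  have hslab : (fun z : ι → ℝ => z i) ⁻¹' Ioc a b = P b \ P a := by
    rw [← preimage_sdiff, Iic_sdiff_Iic]
  have hshift : (· + v) ⁻¹' P b = P a := by
    ext z
    simp [P, v, ← le_sub_iff_add_le]
  have hfv : Integrable (fun z => f (z + v)) := hf.comp_add_right v
  have htranslate : ∫ z in P a, f (z + v) = ∫ z in P b, f z := by
    rw [← hshift]
    exact (measurePreserving_add_right volume v).setIntegral_preimage_emb
      (measurableEmbedding_addRight v) f _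
  calc ‖∫ z in (fun z => z i) ⁻¹' Ioc a b, f z‖
      = ‖(∫ z in P b, f z) - ∫ z in P a, f z‖ := by
        rw [hslab, setIntegral_sdiff (measurable_pi_apply i measurableSet_Iic) hf.integrableOn
          (preimage_mono (Iic_subset_Iic.2 hab))]
    _ = ‖∫ z in P a, (f (z + v) - f z)‖ := by
        rw [integral_sub hfv.integrableOn hf.integrableOn, htranslate]
    _ ≤ ∫ z in P a, ‖f (z + v) - f z‖ := norm_integral_le_integral_norm _
    _ ≤ ∫ z, ‖f (z + v) - f z‖ :=
        setIntegral_le_integral (hfv.sub hf).norm (.of_forall fun _ => norm_nonneg _)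
    _ = ∫ z, ‖f z - f (z + v)‖ := by simp_rw [norm_sub_rev]

theorem MeasureTheory.enorm_setIntegral_integral_dite_le (i : ι) {p : ℝ≥0∞} (hp : 1 ≤ p)
    {f : (ι → ℝ) → E} (hf : MemLp f p) {Ω : Set (ι → ℝ)} (hfΩ : support f ⊆ Ω)
    (hΩ : volume Ω ≠ ∞) {a b : ℝ} (hab : a ≤ b) :
    ‖∫ t in Ioc a b, ∫ y : {j // j ≠ i} → ℝ,
        f (fun j => if hj : j = i then t else y ⟨j, hj⟩)‖ₑ ≤
      eLpNorm (fun z => f z - f (z + Pi.single i (b - a))) p *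
        (2 * volume Ω) ^ (1 - 1 / p.toReal) := by
  set v : ι → ℝ := Pi.single i (b - a)
  set g : (ι → ℝ) → E := fun z => f z - f (z + v)
  have hfint : Integrable f := hf.integrable_of_support_subset hp hfΩ hΩ
  have hgint : Integrable g := hfint.sub (hfint.comp_add_right v)
  have hgΩ : support g ⊆ Ω ∪ (· + v) ⁻¹' Ω := by
    refine support_subset_iff'.2 fun z hz => ?_
    rw [mem_union, not_or] at hz
    simp [g, support_subset_iff'.1 hfΩ _ hz.1, support_subset_iff'.1 hfΩ _ hz.2]
  have hvol : volume (Ω ∪ (· + v) ⁻¹' Ω) ≤ 2 * volume Ω :=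
    (measure_union_le _ _).trans_eq (by rw [measure_preimage_add_right, two_mul])
  calc _ = ‖∫ z in (fun z => z i) ⁻¹' Ioc a b, f z‖ₑ := by
        rw [setIntegral_integral_dite_eq i hfint measurableSet_Ioc]
    _ ≤ ENNReal.ofReal (∫ z, ‖g z‖) := by
        rw [← ofReal_norm]
        exact ENNReal.ofReal_le_ofReal (norm_setIntegral_eval_preimage_Ioc_le i hfint hab)
    _ = eLpNorm g 1 volume := by
        rw [ofReal_integral_norm_eq_lintegral_enorm hgint, eLpNorm_one_eq_lintegral_enorm]
    _ ≤ eLpNorm g p volume * volume (Ω ∪ (· + v) ⁻¹' Ω) ^ (1 - 1 / p.toReal) := by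
        simpa using eLpNorm_le_eLpNorm_mul_rpow_measure_of_support_subset hp hgint.1 hgΩ
    _ ≤ eLpNorm g p volume * (2 * volume Ω) ^ (1 - 1 / p.toReal) := by
        gcongr
        exact ENNReal.one_sub_one_div_toReal_nonneg hp

end Slices

theorem stmt5_general (d : ℕ) (Ω : Set (Fin d → ℝ))
    (hΩb : Bornology.IsBounded Ω)
    (p : ℝ) (hp : 1 ≤ p) (f : (Fin d → ℝ) → ℝ)
    (hsupp : ∀ x, x ∉ Ω → f x = 0)
    (hf : MemLp f (ENNReal.ofReal p) volume)
    (μ : ℕ → ℕ)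
    (hμ : ∀ n : ℕ, ∀ h : Fin d → ℝ, ‖h‖ ≤ (2:ℝ) ^ (-(μ n : ℤ)) →
      eLpNorm (fun x => f x - f (x + h)) (ENNReal.ofReal p) volume <
        ENNReal.ofReal ((2:ℝ) ^ (-(n : ℤ))))
    (i : Fin d) :
    ∀ n : ℕ, ∀ x h : ℝ,
      |h| ≤ (2:ℝ) ^ (-(μ (n + 1 + ⌈Real.logb 2 (volume Ω).toReal⌉.toNat +
            (d - 1) * ⌈Real.logb 2 (Metric.diam Ω)⌉.toNat) : ℤ)) →
      |∫ t in Set.uIcc x (x + h),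
          ∫ y : {j : Fin d // j ≠ i} → ℝ,
            f (fun j => if hj : j = i then t else y ⟨j, hj⟩)| < (2:ℝ) ^ (-(n : ℤ)) := by
  intro n x h hh
  set A := ⌈Real.logb 2 (volume Ω).toReal⌉.toNat
  set N := n + 1 + A + (d - 1) * ⌈Real.logb 2 (Metric.diam Ω)⌉.toNat with hN
  have hp' : 1 ≤ ENNReal.ofReal p := ENNReal.one_le_ofReal.2 hp
  have hΩ : volume Ω ≠ ∞ := hΩb.measure_lt_top.ne
  have hshift : ‖(Pi.single i |h| : Fin d → ℝ)‖ ≤ 2 ^ (-(μ N : ℤ)) := by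
    rwa [Pi.norm_single, Real.norm_eq_abs, abs_abs]
  have hlen : x ⊔ (x + h) - x ⊓ (x + h) = |h| := by
    rw [max_sub_min_eq_abs', abs_sub_comm, add_sub_cancel_left]
  have hI := enorm_setIntegral_integral_dite_le i hp' hf (support_subset_iff'.2 hsupp) hΩ
    (inf_le_sup : x ⊓ (x + h) ≤ x ⊔ (x + h))
  rw [hlen] at hI
  have hvol := ENNReal.two_mul_rpow_le_two_pow_ceil_logb hΩ
    (ENNReal.one_sub_one_div_toReal_nonneg hp') (sub_le_self _ (by positivity))
  rw [uIcc, integral_Icc_eq_integral_Ioc, ← Real.norm_eq_abs,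
    ← ENNReal.ofReal_lt_ofReal_iff (by positivity), ofReal_norm]
  calc _ ≤ _ := hI
    _ ≤ eLpNorm (fun z => f z - f (z + Pi.single i |h|)) (ENNReal.ofReal p) volume *
          ENNReal.ofReal (2 ^ (A + 1)) := by gcongr
    _ < ENNReal.ofReal (2 ^ (-(N : ℤ))) * ENNReal.ofReal (2 ^ (A + 1)) :=
        ENNReal.mul_left_strictMono (by positivity) ENNReal.ofReal_ne_top (hμ N _ hshift)
    _ ≤ ENNReal.ofReal (2 ^ (-(n : ℤ))) := by
        rw [← ENNReal.ofReal_mul (by positivity), ← zpow_natCast, ← zpow_add₀ two_ne_zero]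
        refine ENNReal.ofReal_le_ofReal (zpow_le_zpow_right₀ one_le_two ?_)
        push_cast [hN]
        omega

/-- From an L^p-modulus of f one obtains a singularity modulus of the function f_i
obtained by integrating out all variables except the i-th. -/
theorem stmt5 (d : ℕ) (Ω : Set (Fin d → ℝ)) (hΩm : MeasurableSet Ω)
    (hΩb : Bornology.IsBounded Ω) (hΩpos : 0 < volume Ω)
    (p : ℝ) (hp : 1 ≤ p) (f : (Fin d → ℝ) → ℝ)
    (hsupp : ∀ x, x ∉ Ω → f x = 0)
    (hf : MemLp f (ENNReal.ofReal p) volume)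
    (μ : ℕ → ℕ)
    (hμ : ∀ n : ℕ, ∀ h : Fin d → ℝ, ‖h‖ ≤ (2:ℝ) ^ (-(μ n : ℤ)) →
      eLpNorm (fun x => f x - f (x + h)) (ENNReal.ofReal p) volume <
        ENNReal.ofReal ((2:ℝ) ^ (-(n : ℤ))))
    (i : Fin d) :
    ∀ n : ℕ, ∀ x h : ℝ,
      |h| ≤ (2:ℝ) ^ (-(μ (n + 1 + ⌈Real.logb 2 (volume Ω).toReal⌉.toNat +
            (d - 1) * ⌈Real.logb 2 (Metric.diam Ω)⌉.toNat) : ℤ)) →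
      |∫ t in Set.uIcc x (x + h),
          ∫ y : {j : Fin d // j ≠ i} → ℝ,
            f (fun j => if hj : j = i then t else y ⟨j, hj⟩)| < (2:ℝ) ^ (-(n : ℤ)) :=
  stmt5_general d Ω hΩb p hp f hsupp hf μ hμ i
end

section
/- Let f ∈ L^p(ℝ^d) with 1 ≤ p < ∞, and define the continuous approximations f_m(x) := 2^{dm} ∫_{Q(x,m)} f dλ, where Q(x,m) = x + [−2^{−m−1}, 2^{−m−1}]^d. If μ is an L^p-modulus of f, then for all x, y ∈ ℝ^d with |x − y|_∞ ≤ 2^{−μ(n + ⌈d/p⌉ m)} one has |f_m(x) − f_m(y)| < 2^{−n}; i.e., n ↦ μ(n + ⌈d/p⌉ m) is a modulus of continuity of f_m. -/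
/-!
Write `h = y - x`. Translating the cube `Q(y, m)` back to `Q(x, m)` gives
`f_m(x) - f_m(y) = 2^{dm} ∫_{Q(x,m)} (f - τ_h f)`, and Hölder's inequality on a cube of volume
`2^{-dm}` bounds this by `2^{dm/p} ‖f - τ_h f‖_p < 2^{dm/p - n - ⌈d/p⌉ m} ≤ 2^{-n}`.
-/

open MeasureTheory Set
open scoped ENNReal

section Holder

variable {α E : Type*} [MeasurableSpace α] {μ : Measure α} [NormedAddCommGroup E] [NormedSpace ℝ E]
  {p : ℝ≥0∞} {g : α → E}

theorem enorm_integral_le_eLpNorm_mul_measure_univ_rpow (hp : 1 ≤ p)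
    (hg : AEStronglyMeasurable g μ) :
    ‖∫ x, g x ∂μ‖ₑ ≤ eLpNorm g p μ * μ univ ^ (1 - 1 / p.toReal) :=
  calc ‖∫ x, g x ∂μ‖ₑ ≤ ∫⁻ x, ‖g x‖ₑ ∂μ := enorm_integral_le_lintegral_enorm g
    _ = eLpNorm g 1 μ := eLpNorm_one_eq_lintegral_enorm.symm
    _ ≤ _ := by simpa using eLpNorm_le_eLpNorm_mul_rpow_measure_univ hp hg

theorem norm_setIntegral_le_eLpNorm_mul_measure_rpow (hp : 1 ≤ p) (hg : MemLp g p μ)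
    {s : Set α} (hs : μ s ≠ ∞) :
    ‖∫ x in s, g x ∂μ‖ ≤ (eLpNorm g p μ).toReal * (μ s).toReal ^ (1 - 1 / p.toReal) := by
  have hexp : 0 ≤ 1 - 1 / p.toReal := by
    rcases eq_or_ne p ∞ with rfl | hp_top
    · simp
    · have : 1 ≤ p.toReal := by simpa using ENNReal.toReal_mono hp_top hp
      exact sub_nonneg.2 (div_le_one_of_le₀ this (zero_le_one.trans this))
  have hbound : ‖∫ x in s, g x ∂μ‖ₑ ≤ eLpNorm g p μ * μ s ^ (1 - 1 / p.toReal) := by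
    have := enorm_integral_le_eLpNorm_mul_measure_univ_rpow hp hg.aestronglyMeasurable.restrict
      (μ := μ.restrict s)
    rw [Measure.restrict_apply_univ] at this
    exact this.trans (by gcongr; exact Measure.restrict_le_self)
  rw [← toReal_enorm, ENNReal.toReal_rpow, ← ENNReal.toReal_mul]
  exact ENNReal.toReal_mono
    (ENNReal.mul_ne_top hg.eLpNorm_ne_top (ENNReal.rpow_ne_top_of_nonneg hexp hs)) hbound

end Holder

/-- `Q(x, m)` is `cube x (2 ^ (-m - 1))`. -/
def cube {ι : Type*} (x : ι → ℝ) (r : ℝ) : Set (ι → ℝ) :=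
  Icc (fun i => x i - r) (fun i => x i + r)

section Cube

variable {ι E : Type*} [Fintype ι] [NormedAddCommGroup E] [NormedSpace ℝ E]

theorem volume_cube (x : ι → ℝ) (r : ℝ) :
    volume (cube x r) = ENNReal.ofReal (2 * r) ^ Fintype.card ι := by
  simp [cube, Real.volume_Icc_pi, two_mul]

theorem setIntegral_cube_eq_setIntegral_cube_add (f : (ι → ℝ) → E) (x h : ι → ℝ) (r : ℝ) :
    ∫ t in cube (x + h) r, f t = ∫ t in cube x r, f (t + h) := by
  have hpre : (· + h) ⁻¹' cube (x + h) r = cube x r := by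
    rw [cube, Set.preimage_add_const_Icc, cube]
    congr 1 <;> ext i <;> simp only [Pi.sub_apply, Pi.add_apply] <;> ring
  rw [← (measurePreserving_add_right volume h).setIntegral_preimage_emb
    (MeasurableEquiv.addRight h).measurableEmbedding, hpre]

theorem norm_setIntegral_cube_sub_le {p : ℝ≥0∞} (hp : 1 ≤ p) {f : (ι → ℝ) → E}
    (hf : MemLp f p volume) (x y : ι → ℝ) (r : ℝ) :
    ‖(∫ t in cube x r, f t) - ∫ t in cube y r, f t‖ ≤
      (eLpNorm (fun t => f t - f (t + (y - x))) p volume).toReal *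
        (volume (cube x r)).toReal ^ (1 - 1 / p.toReal) := by
  have hfh : MemLp (fun t => f (t + (y - x))) p volume :=
    hf.comp_measurePreserving (measurePreserving_add_right volume _)
  have hcube : IsCompact (cube x r) := isCompact_Icc
  rw [← add_sub_cancel x y, setIntegral_cube_eq_setIntegral_cube_add, add_sub_cancel,
    ← integral_sub ((hf.locallyIntegrable hp).integrableOn_isCompact hcube)
      ((hfh.locallyIntegrable hp).integrableOn_isCompact hcube)]
  exact norm_setIntegral_le_eLpNorm_mul_measure_rpow hp (hf.sub hfh) hcube.measure_lt_top.ne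

end Cube

theorem two_pow_mul_volume_rpow_le (d m : ℕ) (p : ℝ) :
    (2:ℝ) ^ (d * m) * (((2:ℝ) ^ (-(m:ℤ))) ^ d) ^ (1 - 1 / p) ≤ 2 ^ (⌈(d:ℝ) / p⌉₊ * m) := by
  have hdp : (d:ℝ) / p * m ≤ ⌈(d:ℝ) / p⌉₊ * m := by gcongr; exact Nat.le_ceil _
  rw [← Real.rpow_intCast, ← Real.rpow_natCast _ d, ← Real.rpow_mul zero_le_two,
    ← Real.rpow_mul zero_le_two, ← Real.rpow_natCast, ← Real.rpow_natCast,
    ← Real.rpow_add zero_lt_two]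
  apply Real.rpow_le_rpow_of_exponent_le one_le_two
  have hexp : (d:ℝ) * m + -m * d * (1 - 1 / p) = d / p * m := by ring
  push_cast
  linarith

/-- Modulus of continuity of the continuous approximations
f_m(x) = 2^{dm} ∫_{Q(x,m)} f dλ obtained from an L^p-modulus of f. -/
theorem stmt6 (d : ℕ) (p : ℝ) (hp : 1 ≤ p) (f : (Fin d → ℝ) → ℝ)
    (hf : MemLp f (ENNReal.ofReal p) volume)
    (μ : ℕ → ℕ)
    (hμ : ∀ n : ℕ, ∀ h : Fin d → ℝ, ‖h‖ ≤ (2:ℝ) ^ (-(μ n : ℤ)) →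
      eLpNorm (fun x => f x - f (x + h)) (ENNReal.ofReal p) volume <
        ENNReal.ofReal ((2:ℝ) ^ (-(n : ℤ))))
    (m : ℕ) :
    ∀ n : ℕ, ∀ x y : Fin d → ℝ,
      ‖x - y‖ ≤ (2:ℝ) ^ (-(μ (n + ⌈(d:ℝ)/p⌉₊ * m) : ℤ)) →
      |(2:ℝ) ^ (d * m) *
          (∫ t in Set.Icc (fun i => x i - 2 ^ (-(m:ℤ) - 1)) (fun i => x i + 2 ^ (-(m:ℤ) - 1)), f t) -
        (2:ℝ) ^ (d * m) *
          (∫ t in Set.Icc (fun i => y i - 2 ^ (-(m:ℤ) - 1)) (fun i => y i + 2 ^ (-(m:ℤ) - 1)), f t)|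
        < (2:ℝ) ^ (-(n : ℤ)) := by
  intro n x y hxy
  set k := ⌈(d:ℝ) / p⌉₊
  set r : ℝ := 2 ^ (-(m:ℤ) - 1)
  set S := (eLpNorm (fun t => f t - f (t + (y - x))) (ENNReal.ofReal p) volume).toReal
  have hS : S < 2 ^ (-((n + k * m : ℕ) : ℤ)) :=
    ENNReal.toReal_lt_of_lt_ofReal (hμ _ (y - x) (by rwa [norm_sub_rev]))
  have hvol : (volume (cube x r)).toReal = ((2:ℝ) ^ (-(m:ℤ))) ^ d := by
    rw [volume_cube, Fintype.card_fin, ENNReal.toReal_pow, mul_comm,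
      ← zpow_add_one₀ two_ne_zero, sub_add_cancel, ENNReal.toReal_ofReal (by positivity)]
  have hcube := norm_setIntegral_cube_sub_le (ENNReal.one_le_ofReal.2 hp) hf x y r
  rw [hvol, ENNReal.toReal_ofReal (by linarith)] at hcube
  calc _ = (2:ℝ) ^ (d * m) * ‖(∫ t in cube x r, f t) - ∫ t in cube y r, f t‖ := by
        rw [← mul_sub, abs_mul, abs_of_pos (by positivity), Real.norm_eq_abs]; rfl
    _ ≤ (2:ℝ) ^ (d * m) * (S * (((2:ℝ) ^ (-(m:ℤ))) ^ d) ^ (1 - 1 / p)) := by gcongr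
    _ = S * ((2:ℝ) ^ (d * m) * (((2:ℝ) ^ (-(m:ℤ))) ^ d) ^ (1 - 1 / p)) := by ring
    _ ≤ S * 2 ^ (k * m) := by gcongr; exact two_pow_mul_volume_rpow_le d m p
    _ < 2 ^ (-((n + k * m : ℕ) : ℤ)) * 2 ^ (k * m) := by gcongr
    _ = 2 ^ (-(n : ℤ)) := by
        rw [← zpow_natCast, ← zpow_add₀ two_ne_zero]; push_cast; ring_nf
end

section
/- Let f ∈ L^1([0,1]) be weakly differentiable with weak derivative f′ ∈ L^p([0,1]), and let μ be an L^p-modulus of f′. Then n ↦ μ(n+1) is a modulus of continuity of the continuous representative of f: for all x, y ∈ [0,1], |x − y| ≤ 2^{−μ(n+1)} implies |f(x) − f(y)| < 2^{−n}. -/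
/-!
For `x ≤ y` and `δ = y - x`, the translate `f'(· + δ)` integrated over `[x, 1]` covers
`[y, 1 + δ]`, and `f'` vanishes beyond `1`; hence `f y - f x = ∫_x^1 (f' t - f' (t + δ)) dt`.
Since `[x, 1]` has length at most `1`, Hölder's inequality bounds this by the `L^p` norm of
`f' - τ_δ f'`, which the modulus makes smaller than `2^{-(n+1)} < 2^{-n}`.
-/

open MeasureTheory Set
open scoped ENNReal

variable {E : Type*} [NormedAddCommGroup E] [NormedSpace ℝ E]

theorem intervalIntegral_eq_intervalIntegral_sub_comp_add {g : ℝ → E}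
    (hg : LocallyIntegrable g volume) {b : ℝ} (hg_zero : ∀ t, b < t → g t = 0)
    {x y : ℝ} (hxy : x ≤ y) :
    ∫ t in x..y, g t = ∫ t in x..b, (g t - g (t + (y - x))) := by
  have hii : ∀ a c, IntervalIntegrable g volume a c := fun a c =>
    (hg.integrableOn_isCompact isCompact_uIcc).intervalIntegrable
  have htail : ∫ t in b..b + (y - x), g t = 0 := by
    rw [intervalIntegral.integral_of_le (by linarith)]
    exact setIntegral_eq_zero_of_forall_eq_zero fun t ht => hg_zero t ht.1
  have hshift : IntervalIntegrable (fun t => g (t + (y - x))) volume x b := by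
    simpa using (hii (x + (y - x)) (b + (y - x))).comp_add_right (y - x)
  rw [intervalIntegral.integral_sub (hii x b) hshift, intervalIntegral.integral_comp_add_right,
    add_sub_cancel, ← intervalIntegral.integral_add_adjacent_intervals (hii x y) (hii y b),
    ← intervalIntegral.integral_add_adjacent_intervals (hii y b) (hii b (b + (y - x))), htail]
  abel

theorem enorm_intervalIntegral_le_eLpNorm {g : ℝ → E} {p : ℝ≥0∞} (hp : 1 ≤ p) {a b : ℝ}
    (hab : a ≤ b) (hba : b - a ≤ 1) (hg : AEStronglyMeasurable g volume) :
    ‖∫ t in a..b, g t‖ₑ ≤ eLpNorm g p volume := by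
  have hvol : volume.restrict (Ioc a b) univ ≤ 1 := by
    simpa [Real.volume_Ioc] using ENNReal.ofReal_le_one.mpr hba
  have hexp : 0 ≤ 1 / (1 : ℝ≥0∞).toReal - 1 / p.toReal := by
    rcases eq_or_ne p ∞ with rfl | hp_top
    · simp
    · simpa using inv_le_one_of_one_le₀ (ENNReal.toReal_mono hp_top hp)
  calc ‖∫ t in a..b, g t‖ₑ ≤ ∫⁻ t in Ioc a b, ‖g t‖ₑ := by
        rw [intervalIntegral.integral_of_le hab]
        exact enorm_integral_le_lintegral_enorm _
    _ = eLpNorm g 1 (volume.restrict (Ioc a b)) := eLpNorm_one_eq_lintegral_enorm.symm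
    _ ≤ eLpNorm g p (volume.restrict (Ioc a b)) * volume.restrict (Ioc a b) univ ^
          (1 / (1 : ℝ≥0∞).toReal - 1 / p.toReal) :=
        eLpNorm_le_eLpNorm_mul_rpow_measure_univ hp hg.restrict
    _ ≤ eLpNorm g p volume * 1 := by
        gcongr
        · exact Measure.restrict_le_self
        · exact ENNReal.rpow_le_one hvol hexp
    _ = eLpNorm g p volume := mul_one _

theorem enorm_sub_le_eLpNorm_sub_comp_add {p : ℝ≥0∞} (hp : 1 ≤ p) {f f' : ℝ → E}
    (hf' : MemLp f' p volume) (hf'_zero : ∀ t, 1 < t → f' t = 0)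
    (hfund : ∀ x ∈ Icc (0 : ℝ) 1, ∀ y ∈ Icc (0 : ℝ) 1, f y - f x = ∫ t in x..y, f' t)
    {x y : ℝ} (hx : x ∈ Icc (0 : ℝ) 1) (hy : y ∈ Icc (0 : ℝ) 1) (hxy : x ≤ y) :
    ‖f y - f x‖ₑ ≤ eLpNorm (fun t => f' t - f' (t + (y - x))) p volume := by
  rw [hfund x hx y hy, intervalIntegral_eq_intervalIntegral_sub_comp_add
    (hf'.locallyIntegrable hp) hf'_zero hxy]
  refine enorm_intervalIntegral_le_eLpNorm hp hx.2 (by linarith [hx.1]) ?_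
  exact hf'.aestronglyMeasurable.sub
    (hf'.aestronglyMeasurable.comp_measurePreserving (measurePreserving_add_right volume _))

/-- If f is weakly differentiable on [0,1] with derivative f' (extended by zero)
having L^p-modulus μ, then n ↦ μ(n+1) is a modulus of continuity of f. -/
theorem stmt8 (p : ℝ) (hp : 1 ≤ p) (f f' : ℝ → ℝ)
    (hsupp' : ∀ x, x ∉ Set.Icc (0:ℝ) 1 → f' x = 0)
    (hf' : MemLp f' (ENNReal.ofReal p) volume)
    (hfund : ∀ x ∈ Set.Icc (0:ℝ) 1, ∀ y ∈ Set.Icc (0:ℝ) 1,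
      f y - f x = ∫ t in x..y, f' t)
    (μ : ℕ → ℕ)
    (hμ : ∀ n : ℕ, ∀ h : ℝ, |h| ≤ (2:ℝ) ^ (-(μ n : ℤ)) →
      eLpNorm (fun x => f' x - f' (x + h)) (ENNReal.ofReal p) volume <
        ENNReal.ofReal ((2:ℝ) ^ (-(n : ℤ)))) :
    ∀ n : ℕ, ∀ x ∈ Set.Icc (0:ℝ) 1, ∀ y ∈ Set.Icc (0:ℝ) 1,
      |x - y| ≤ (2:ℝ) ^ (-(μ (n + 1) : ℤ)) → |f x - f y| < (2:ℝ) ^ (-(n : ℤ)) := by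
  intro n x hx y hy hdist
  wlog hxy : x ≤ y generalizing x y
  · rw [abs_sub_comm] at hdist ⊢
    exact this y hy x hx hdist (le_of_not_ge hxy)
  have hp' : 1 ≤ ENNReal.ofReal p := by simpa using ENNReal.ofReal_le_ofReal hp
  have hinc := enorm_sub_le_eLpNorm_sub_comp_add hp' hf'
    (fun t ht => hsupp' t fun h => (not_le.mpr ht) h.2) hfund hx hy hxy
  have hsmall := hinc.trans_lt (hμ (n + 1) (y - x) (by rwa [abs_sub_comm]))
  rw [Real.enorm_eq_ofReal_abs, ENNReal.ofReal_lt_ofReal_iff (by positivity)] at hsmall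
  rw [abs_sub_comm]
  calc |f y - f x| < (2:ℝ) ^ (-((n + 1 : ℕ) : ℤ)) := hsmall
    _ ≤ (2:ℝ) ^ (-(n : ℤ)) := zpow_le_zpow_right₀ one_le_two (by omega)
end

section
/- Let f: [0,1] → ℝ be (m−1)-times continuously differentiable, and let x₁ < x₂ < ⋯ < x_{2^{m−1}} be points in [0,1] with pairwise distance at least 2^{−m} such that |f(x_i)| ≤ C for all i. Then there exists z ∈ [0,1] such that |f^{(m−1)}(z)| ≤ 2^{m²−1} C. -/
/-!
Pair up consecutive points: by the mean value theorem, between the two points of each pair there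
is a point where the derivative is at most `2D / δ` in absolute value, where `D` bounds the
function at the points and `δ` is their minimal gap. These new points are again `δ`-separated,
so the argument iterates, halving the number of points and gaining a factor `2 / δ = 2 ^ (m + 1)`
at each of the `m - 1` derivatives.
-/

open Set Topology

def IncreasingWithGap {n : ℕ} (δ : ℝ) (y : Fin n → ℝ) : Prop :=
  ∀ ⦃i j : Fin n⦄, i < j → y i + δ ≤ y j

lemma increasingWithGap_comp_sort {n : ℕ} {δ : ℝ} {x : Fin n → ℝ}
    (hsep : ∀ i j, i ≠ j → δ ≤ |x i - x j|) : IncreasingWithGap δ (x ∘ Tuple.sort x) := by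
  intro i j hij
  have hle : x (Tuple.sort x i) ≤ x (Tuple.sort x j) := Tuple.monotone_sort x hij.le
  have hdist := hsep _ _ ((Tuple.sort x).injective.ne hij.ne')
  rw [abs_of_nonneg (sub_nonneg.2 hle)] at hdist
  simp only [Function.comp_apply]
  linarith

lemma exists_abs_deriv_le_of_abs_le {g : ℝ → ℝ} {a b D : ℝ} (hab : a < b)
    (hgc : ContinuousOn g (Icc a b)) (hgd : DifferentiableOn ℝ g (Ioo a b))
    (ha : |g a| ≤ D) (hb : |g b| ≤ D) : ∃ c ∈ Ioo a b, |deriv g c| ≤ 2 * D / (b - a) := by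
  obtain ⟨c, hc, hslope⟩ := exists_deriv_eq_slope g hab hgc hgd
  refine ⟨c, hc, ?_⟩
  rw [hslope, abs_div, abs_of_pos (sub_pos.2 hab)]
  gcongr
  calc |g b - g a| ≤ |g b| + |g a| := abs_sub _ _
    _ ≤ 2 * D := by linarith

lemma exists_increasingWithGap_abs_derivWithin_le {g : ℝ → ℝ} {a b δ D : ℝ} {N : ℕ}
    (hδ : 0 < δ) (hg : DifferentiableOn ℝ g (Icc a b)) {y : Fin (2 * N) → ℝ}
    (hy : ∀ i, y i ∈ Icc a b) (hgap : IncreasingWithGap δ y) (hbd : ∀ i, |g (y i)| ≤ D) :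
    ∃ z : Fin N → ℝ, (∀ i, z i ∈ Icc a b) ∧ IncreasingWithGap δ z ∧
      ∀ i, |derivWithin g (Icc a b) (z i)| ≤ 2 * D / δ := by
  let left (i : Fin N) : Fin (2 * N) := ⟨2 * i, by omega⟩
  let right (i : Fin N) : Fin (2 * N) := ⟨2 * i + 1, by omega⟩
  have hpair (i : Fin N) : y (left i) + δ ≤ y (right i) :=
    hgap (Fin.mk_lt_mk.2 (Nat.lt_succ_self _))
  have hsub (i : Fin N) : Icc (y (left i)) (y (right i)) ⊆ Icc a b :=
    Icc_subset_Icc (hy _).1 (hy _).2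
  have hnhds (i : Fin N) {t : ℝ} (ht : t ∈ Ioo (y (left i)) (y (right i))) : Icc a b ∈ 𝓝 t :=
    Icc_mem_nhds ((hy _).1.trans_lt ht.1) (ht.2.trans_le (hy _).2)
  have hmvt (i : Fin N) : ∃ c ∈ Ioo (y (left i)) (y (right i)),
      |deriv g c| ≤ 2 * D / (y (right i) - y (left i)) :=
    exists_abs_deriv_le_of_abs_le (by linarith [hpair i]) (hg.continuousOn.mono (hsub i))
      (fun t ht => ((hg t (hsub i (Ioo_subset_Icc_self ht))).differentiableAt
        (hnhds i ht)).differentiableWithinAt) (hbd _) (hbd _)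
  choose c hc hderiv using hmvt
  refine ⟨c, fun i => hsub i (Ioo_subset_Icc_self (hc i)), ?_, fun i => ?_⟩
  · intro i j hij
    have hgap' : y (right i) + δ ≤ y (left j) := hgap (Fin.mk_lt_mk.2 (by omega))
    linarith [(hc i).2, (hc j).1]
  · have hD : 0 ≤ D := (abs_nonneg _).trans (hbd (left i))
    rw [derivWithin_of_mem_nhds (hnhds i (hc i))]
    exact (hderiv i).trans (div_le_div_of_nonneg_left (by linarith) hδ (by linarith [hpair i]))

theorem exists_abs_iteratedDerivWithin_le {a b δ D : ℝ} (hab : a < b) (hδ : 0 < δ) {k : ℕ}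
    {f : ℝ → ℝ} (hf : ContDiffOn ℝ k f (Icc a b)) {y : Fin (2 ^ k) → ℝ}
    (hy : ∀ i, y i ∈ Icc a b) (hgap : IncreasingWithGap δ y) (hbd : ∀ i, |f (y i)| ≤ D) :
    ∃ z ∈ Icc a b, |iteratedDerivWithin k f (Icc a b) z| ≤ (2 / δ) ^ k * D := by
  induction k generalizing f D with
  | zero => exact ⟨y 0, hy 0, by simpa using hbd 0⟩
  | succ k ih =>
    have hs : UniqueDiffOn ℝ (Icc a b) := uniqueDiffOn_Icc hab
    let y' : Fin (2 * 2 ^ k) → ℝ := y ∘ Fin.cast (pow_succ' 2 k).symm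
    obtain ⟨z, hz, hzgap, hzbd⟩ := exists_increasingWithGap_abs_derivWithin_le hδ
      (hf.differentiableOn (by simp)) (y := y') (fun i => hy _)
      (fun i j hij => hgap ((Fin.cast_lt_cast _).2 hij)) (fun i => hbd _)
    obtain ⟨w, hw, hwbd⟩ := ih (hf.derivWithin hs le_rfl) hz hzgap hzbd
    refine ⟨w, hw, ?_⟩
    rw [iteratedDerivWithin_succ']
    calc _ ≤ (2 / δ) ^ k * (2 * D / δ) := hwbd
      _ = (2 / δ) ^ (k + 1) * D := by ring

theorem stmt11_general (m : ℕ) (f : ℝ → ℝ)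
    (hf : ContDiffOn ℝ (m - 1 : ℕ) f (Set.Icc (0:ℝ) 1))
    (C : ℝ) (x : Fin (2 ^ (m - 1)) → ℝ)
    (hx : ∀ i, x i ∈ Set.Icc (0:ℝ) 1)
    (hsep : ∀ i j, i ≠ j → (2:ℝ) ^ (-(m : ℤ)) ≤ |x i - x j|)
    (hbd : ∀ i, |f (x i)| ≤ C) :
    ∃ z ∈ Set.Icc (0:ℝ) 1,
      |iteratedDerivWithin (m - 1) f (Set.Icc (0:ℝ) 1) z| ≤ 2 ^ (m ^ 2 - 1) * C := by
  obtain ⟨z, hz, hzbd⟩ := exists_abs_iteratedDerivWithin_le zero_lt_one (by positivity)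
    hf (fun i => hx _) (increasingWithGap_comp_sort hsep) (fun i => hbd _)
  refine ⟨z, hz, hzbd.trans_eq ?_⟩
  have hexp : (m + 1) * (m - 1) = m ^ 2 - 1 := by simpa using (Nat.sq_sub_sq m 1).symm
  rw [zpow_neg, zpow_natCast, div_inv_eq_mul, ← pow_succ', ← pow_mul, hexp]

/-- Iterated mean value theorem: if an (m-1)-times continuously differentiable f
is bounded by C at 2^{m-1} points of pairwise distance at least 2^{-m} in [0,1],
then |f^{(m-1)}(z)| ≤ 2^{m²-1}·C at some z ∈ [0,1]. -/
theorem stmt11 (m : ℕ) (hm : 1 ≤ m) (f : ℝ → ℝ)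
    (hf : ContDiffOn ℝ (m - 1 : ℕ) f (Set.Icc (0:ℝ) 1))
    (C : ℝ) (x : Fin (2 ^ (m - 1)) → ℝ)
    (hx : ∀ i, x i ∈ Set.Icc (0:ℝ) 1)
    (hsep : ∀ i j, i ≠ j → (2:ℝ) ^ (-(m : ℤ)) ≤ |x i - x j|)
    (hbd : ∀ i, |f (x i)| ≤ C) :
    ∃ z ∈ Set.Icc (0:ℝ) 1,
      |iteratedDerivWithin (m - 1) f (Set.Icc (0:ℝ) 1) z| ≤ 2 ^ (m ^ 2 - 1) * C :=
  stmt11_general m f hf C x hx hsep hbd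
end

section
/- Let Ω ⊆ ℝ^d be measurable with λ(Ω) < ∞, let f ∈ C(Ω) be bounded with modulus of continuity μ (i.e., |x−y|_∞ ≤ 2^{−μ(n)} implies |f(x)−f(y)| < 2^{−n} for x,y ∈ Ω), and let ν: ℕ → ℕ satisfy: |h|_∞ ≤ 2^{−ν(m)} implies λ(Ω Δ (Ω + h))^{1/p} < 2^{−m}. Then η(n) := max{ μ(n + ⌈log₂ λ(Ω)⌉ + 1), ν(n + ⌈log₂ ‖f‖_∞⌉ + 1) } is an L^p-modulus of f: for |h|_∞ ≤ 2^{−η(n)}, ‖f̃ − τ_h f̃‖_p < 2^{−n}. -/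
open MeasureTheory
open scoped ENNReal symmDiff

/-!
Write `g x = f̃ x - f̃ (x + h)`, `k₁ = ⌈log₂ λ(Ω)⌉` and `k₂ = ⌈log₂ B⌉`. Where both `x` and
`x + h` lie in `Ω`, the modulus `μ` gives `|g| < 2^-(n+k₁+1)` on a set of measure at most
`λ(Ω) ≤ 2^k₁`; where exactly one of them does (the set `Ω ∆ (Ω - h)`, a translate of
`Ω ∆ (Ω + h)`), `|g| ≤ B ≤ 2^k₂` on a set whose measure to the power `1/p` is
`< 2^-(n+k₂+1)` by `ν`; elsewhere `g = 0`. By Minkowski, `‖g‖_p` is at most `2^-(n+1)` from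
the first part plus less than `2^-(n+1)` from the second.
-/

theorem eLpNorm_le_of_norm_le_indicator_add_indicator {α F : Type*} [MeasurableSpace α]
    [NormedAddCommGroup F] {μ : Measure α} {p : ℝ≥0∞} (hp : 1 ≤ p) {g : α → F}
    {s t : Set α} {a b : ℝ} (ha : 0 ≤ a) (hb : 0 ≤ b)
    (hg : ∀ x, ‖g x‖ ≤ s.indicator (fun _ => a) x + t.indicator (fun _ => b) x) :
    eLpNorm g p μ ≤
      ENNReal.ofReal a * μ s ^ (1 / p.toReal) + ENNReal.ofReal b * μ t ^ (1 / p.toReal) := by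
  -- Minkowski needs measurable summands; measurable hulls have the same measure.
  set s' := toMeasurable μ s
  set t' := toMeasurable μ t
  have hg' : ∀ x, ‖g x‖ ≤ s'.indicator (fun _ => a) x + t'.indicator (fun _ => b) x :=
    fun x => (hg x).trans <| add_le_add
      (Set.indicator_le_indicator_of_subset (subset_toMeasurable μ s) (fun _ => ha) x)
      (Set.indicator_le_indicator_of_subset (subset_toMeasurable μ t) (fun _ => hb) x)
  calc eLpNorm g p μ
      ≤ eLpNorm (s'.indicator (fun _ => a) + t'.indicator (fun _ => b)) p μ :=
        eLpNorm_mono_real hg'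
    _ ≤ eLpNorm (s'.indicator (fun _ => a)) p μ + eLpNorm (t'.indicator (fun _ => b)) p μ :=
        eLpNorm_add_le
          (aestronglyMeasurable_const.indicator (measurableSet_toMeasurable μ s))
          (aestronglyMeasurable_const.indicator (measurableSet_toMeasurable μ t)) hp
    _ ≤ ‖a‖ₑ * μ s' ^ (1 / p.toReal) + ‖b‖ₑ * μ t' ^ (1 / p.toReal) :=
        add_le_add (eLpNorm_indicator_const_le a p) (eLpNorm_indicator_const_le b p)
    _ = _ := by
        rw [measure_toMeasurable, measure_toMeasurable, Real.enorm_eq_ofReal ha,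
          Real.enorm_eq_ofReal hb]

theorem norm_indicator_sub_indicator_add_le {G F : Type*} [Add G] [NormedAddCommGroup F]
    {f : G → F} {Ω : Set G} {h : G} {a b : ℝ} (ha : 0 ≤ a)
    (hosc : ∀ x ∈ Ω, x + h ∈ Ω → ‖f x - f (x + h)‖ ≤ a) (hbound : ∀ x ∈ Ω, ‖f x‖ ≤ b) (x : G) :
    ‖Ω.indicator f x - Ω.indicator f (x + h)‖ ≤
      Ω.indicator (fun _ => a) x + (Ω ∆ ((· + h) ⁻¹' Ω)).indicator (fun _ => b) x := by
  by_cases hx : x ∈ Ω <;> by_cases hxh : x + h ∈ Ω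
  · simpa [hx, hxh, Set.mem_symmDiff] using hosc x hx hxh
  · simpa [hx, hxh, Set.mem_symmDiff] using (hbound x hx).trans (le_add_of_nonneg_left ha)
  · simpa [hx, hxh, Set.mem_symmDiff] using hbound _ hxh
  · simp [hx, hxh, Set.mem_symmDiff]

theorem le_two_pow_toNat_ceil_logb (L : ℝ) : L ≤ 2 ^ ⌈Real.logb 2 L⌉.toNat := by
  rcases le_or_gt L 0 with hL | hL
  · exact hL.trans (by positivity)
  calc L ≤ (2 : ℝ) ^ (⌈Real.logb 2 L⌉.toNat : ℝ) := by
        rw [← Real.logb_le_iff_le_rpow one_lt_two hL]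
        exact (Int.le_ceil _).trans (by exact_mod_cast Int.self_le_toNat _)
    _ = 2 ^ ⌈Real.logb 2 L⌉.toNat := Real.rpow_natCast 2 _

theorem ENNReal.rpow_one_div_le_of_le {x y : ℝ≥0∞} {p : ℝ} (hxy : x ≤ y) (hy : 1 ≤ y)
    (hp : 1 ≤ p) : x ^ (1 / p) ≤ y :=
  calc x ^ (1 / p) ≤ y ^ (1 / p) := by gcongr
    _ ≤ y ^ (1 : ℝ) := ENNReal.rpow_le_rpow_of_exponent_le hy ((div_le_one (by linarith)).2 hp)
    _ = y := ENNReal.rpow_one y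

theorem two_zpow_neg_add_mul_two_pow (n k : ℕ) :
    (2 : ℝ) ^ (-((n + k + 1 : ℕ) : ℤ)) * 2 ^ k = 2 ^ (-(n : ℤ)) / 2 := by
  rw [← zpow_natCast (2 : ℝ) k, ← zpow_add₀ two_ne_zero, div_eq_mul_inv, ← zpow_neg_one,
    ← zpow_add₀ two_ne_zero]
  congr 1
  push_cast
  ring

theorem eLpNorm_indicator_sub_indicator_add_le {G F : Type*} [Add G] [MeasurableSpace G]
    [NormedAddCommGroup F] {μ : Measure G} {p : ℝ≥0∞} (hp : 1 ≤ p) {f : G → F} {Ω : Set G}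
    {h : G} {a b : ℝ} (ha : 0 ≤ a) (hb : 0 ≤ b)
    (hosc : ∀ x ∈ Ω, x + h ∈ Ω → ‖f x - f (x + h)‖ ≤ a) (hbound : ∀ x ∈ Ω, ‖f x‖ ≤ b) :
    eLpNorm (fun x => Ω.indicator f x - Ω.indicator f (x + h)) p μ ≤
      ENNReal.ofReal a * μ Ω ^ (1 / p.toReal) +
        ENNReal.ofReal b * μ (Ω ∆ ((· + h) ⁻¹' Ω)) ^ (1 / p.toReal) :=
  eLpNorm_le_of_norm_le_indicator_add_indicator hp ha hb
    (norm_indicator_sub_indicator_add_le ha hosc hbound)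

theorem stmt12_general (d : ℕ) (Ω : Set (Fin d → ℝ))
    (hΩfin : volume Ω < ⊤)
    (p : ℝ) (hp : 1 ≤ p) (f : (Fin d → ℝ) → ℝ)
    (B : ℝ) (hB : ∀ x ∈ Ω, |f x| ≤ B)
    (μ ν : ℕ → ℕ)
    (hμ : ∀ n : ℕ, ∀ x ∈ Ω, ∀ y ∈ Ω,
      ‖x - y‖ ≤ (2:ℝ) ^ (-(μ n : ℤ)) → |f x - f y| < (2:ℝ) ^ (-(n : ℤ)))
    (hν : ∀ m : ℕ, ∀ h : Fin d → ℝ, ‖h‖ ≤ (2:ℝ) ^ (-(ν m : ℤ)) →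
      (volume (Ω ∆ ((fun x => x + h) '' Ω))) ^ (1 / p) <
        ENNReal.ofReal ((2:ℝ) ^ (-(m : ℤ)))) :
    ∀ n : ℕ, ∀ h : Fin d → ℝ,
      ‖h‖ ≤ (2:ℝ) ^ (-(max (μ (n + ⌈Real.logb 2 (volume Ω).toReal⌉.toNat + 1))
                          (ν (n + ⌈Real.logb 2 B⌉.toNat + 1)) : ℤ)) →
      eLpNorm (fun x => Ω.indicator f x - Ω.indicator f (x + h))
          (ENNReal.ofReal p) volume < ENNReal.ofReal ((2:ℝ) ^ (-(n : ℤ))) := by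
  intro n h hh
  set k₁ := ⌈Real.logb 2 (volume Ω).toReal⌉.toNat
  set k₂ := ⌈Real.logb 2 B⌉.toNat
  have hp' : (ENNReal.ofReal p).toReal = p := ENNReal.toReal_ofReal (by linarith)
  have hosc : ∀ x ∈ Ω, x + h ∈ Ω → ‖f x - f (x + h)‖ ≤ 2 ^ (-((n + k₁ + 1 : ℕ) : ℤ)) := by
    refine fun x hx hxh => (hμ _ x hx _ hxh ?_).le
    rw [sub_add_cancel_left, norm_neg]
    exact hh.trans (zpow_le_zpow_right₀ one_le_two (by omega))
  have hbound : ∀ x ∈ Ω, ‖f x‖ ≤ 2 ^ k₂ :=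
    fun x hx => (hB x hx).trans (le_two_pow_toNat_ceil_logb B)
  have hvol : volume Ω ^ (1 / p) ≤ ENNReal.ofReal (2 ^ k₁) := by
    refine ENNReal.rpow_one_div_le_of_le ?_ (ENNReal.one_le_ofReal.2 (one_le_pow₀ one_le_two)) hp
    rw [← ENNReal.ofReal_toReal hΩfin.ne]
    exact ENNReal.ofReal_le_ofReal (le_two_pow_toNat_ceil_logb _)
  have hsymm : volume (Ω ∆ ((· + h) ⁻¹' Ω)) ^ (1 / p) <
      ENNReal.ofReal (2 ^ (-((n + k₂ + 1 : ℕ) : ℤ))) := by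
    rw [← Set.image_add_right']
    exact hν _ (-h) (by rw [norm_neg]; exact hh.trans (zpow_le_zpow_right₀ one_le_two (by omega)))
  calc _ ≤ ENNReal.ofReal (2 ^ (-((n + k₁ + 1 : ℕ) : ℤ))) * volume Ω ^ (1 / p) +
        ENNReal.ofReal (2 ^ k₂) * volume (Ω ∆ ((· + h) ⁻¹' Ω)) ^ (1 / p) := by
        simpa only [hp'] using eLpNorm_indicator_sub_indicator_add_le
          (ENNReal.one_le_ofReal.2 hp) (by positivity) (by positivity) hosc hbound
    _ < ENNReal.ofReal (2 ^ (-((n + k₁ + 1 : ℕ) : ℤ))) * ENNReal.ofReal (2 ^ k₁) +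
        ENNReal.ofReal (2 ^ k₂) * ENNReal.ofReal (2 ^ (-((n + k₂ + 1 : ℕ) : ℤ))) :=
        ENNReal.add_lt_add_of_le_of_lt (by finiteness) (by gcongr)
          (ENNReal.mul_lt_mul_right (by simp) ENNReal.ofReal_ne_top hsymm)
    _ = ENNReal.ofReal (2 ^ (-(n : ℤ))) := by
        rw [← ENNReal.ofReal_mul (by positivity), ← ENNReal.ofReal_mul (by positivity),
          mul_comm (2 ^ k₂ : ℝ), two_zpow_neg_add_mul_two_pow, two_zpow_neg_add_mul_two_pow,
          ← ENNReal.ofReal_add (by positivity) (by positivity), add_halves]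

/-- From a modulus of continuity of f on Ω, a bound B on |f|, and an L^p-modulus ν
of the characteristic function of Ω, one obtains an L^p-modulus of the extension
of f by zero: η(n) = max{μ(n + ⌈log₂ λ(Ω)⌉ + 1), ν(n + ⌈log₂ B⌉ + 1)}. -/
theorem stmt12 (d : ℕ) (Ω : Set (Fin d → ℝ)) (hΩm : MeasurableSet Ω)
    (hΩfin : volume Ω < ⊤)
    (p : ℝ) (hp : 1 ≤ p) (f : (Fin d → ℝ) → ℝ) (hcont : ContinuousOn f Ω)
    (B : ℝ) (hB : ∀ x ∈ Ω, |f x| ≤ B)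
    (μ ν : ℕ → ℕ)
    (hμ : ∀ n : ℕ, ∀ x ∈ Ω, ∀ y ∈ Ω,
      ‖x - y‖ ≤ (2:ℝ) ^ (-(μ n : ℤ)) → |f x - f y| < (2:ℝ) ^ (-(n : ℤ)))
    (hν : ∀ m : ℕ, ∀ h : Fin d → ℝ, ‖h‖ ≤ (2:ℝ) ^ (-(ν m : ℤ)) →
      (volume (Ω ∆ ((fun x => x + h) '' Ω))) ^ (1 / p) <
        ENNReal.ofReal ((2:ℝ) ^ (-(m : ℤ)))) :
    ∀ n : ℕ, ∀ h : Fin d → ℝ,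
      ‖h‖ ≤ (2:ℝ) ^ (-(max (μ (n + ⌈Real.logb 2 (volume Ω).toReal⌉.toNat + 1))
                          (ν (n + ⌈Real.logb 2 B⌉.toNat + 1)) : ℤ)) →
      eLpNorm (fun x => Ω.indicator f x - Ω.indicator f (x + h))
          (ENNReal.ofReal p) volume < ENNReal.ofReal ((2:ℝ) ^ (-(n : ℤ))) :=
  stmt12_general d Ω hΩfin p hp f B hB μ ν hμ hν
end

section
/- For l: ℕ → ℕ strictly increasing when nonzero and C ∈ ℕ, let K^∞_{l,C} ⊆ C([0,1]) be the set of continuous functions f with ‖f‖_∞ ≤ 2^C and with l as modulus of continuity (|x−y| ≤ 2^{−l(n)} implies |f(x)−f(y)| < 2^{−n}). Then for every n, K^∞_{l,C} can be covered by at most 2^{2^{l(n)+1} + n + C + 2} balls of radius 2^{−n} in the supremum norm. -/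
/-!
Cut `[0,1]` at the nodes `i / N`, `N = 2 ^ l n`, and widen the `i`-th cell by
`ρ = 2 ^ (-l (n + 3)) / 2` on both sides. Splitting a distance `≤ 1 / N + 2ρ` into one of
length `≤ 1 / N` and one of length `≤ 2ρ` shows that `f` oscillates by at most `(1 + 1/8) δ`,
`δ = 2 ^ (-n)`, on such a window. Hence some point `c i` of the shifted lattice
`s ℤ + i s / 2`, `s = 4 δ / 5`, is within `δ` of `f` on the whole window. Both `c i` and
`c (i + 1)` are within `δ` of `f ((i + 1) / N)`, and the half-step shift makes their difference
an odd multiple of `s / 2` below `2 δ = 5 s / 2`: one of four values. So the `c i` are coded by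
`c 0` and `N - 1` two-bit increments. The approximant `∑ i, (R i - R (i + 1)) * c i`, with
ramps `R i` rising across the nodes, is at every point a convex combination of those `c i`
whose window contains the point, hence within `δ` of `f`.
-/

open Finset

namespace SupNormCover

theorem abs_sub_sum_lt_of_antitone {R c : ℕ → ℝ} {m : ℕ} {y δ : ℝ} (hR : Antitone R)
    (h0 : R 0 = 1) (hm : R m = 0) (hc : ∀ i < m, R (i + 1) < R i → |y - c i| < δ) :
    |y - ∑ i ∈ range m, (R i - R (i + 1)) * c i| < δ := by
  have hsum : ∀ g : ℕ → ℝ, ∑ i ∈ range m with R (i + 1) < R i, (R i - R (i + 1)) * g i =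
      ∑ i ∈ range m, (R i - R (i + 1)) * g i :=
    fun g => sum_filter_of_ne fun i _ hi =>
      lt_of_le_of_ne (hR i.le_succ) fun h => hi (by rw [h, sub_self, zero_mul])
  have hweights : ∑ i ∈ range m with R (i + 1) < R i, (R i - R (i + 1)) = 1 := by
    simpa only [mul_one, sum_range_sub', h0, hm, sub_zero] using hsum fun _ => 1
  have hmem := (convex_ball y δ).sum_mem (fun i _ => sub_nonneg.2 (hR i.le_succ)) hweights
    (z := c) fun i hi => by
      rw [mem_filter, mem_range] at hi
      rw [Metric.mem_ball, Real.dist_eq, abs_sub_comm]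
      exact hc i hi.1 hi.2
  rw [Metric.mem_ball, Real.dist_eq, abs_sub_comm] at hmem
  simpa only [smul_eq_mul, Nat.succ_eq_add_one, hsum c] using hmem

theorem exists_forall_abs_sub_le_half {A : Set ℝ} {D : ℝ}
    (hD : ∀ a ∈ A, ∀ b ∈ A, |a - b| ≤ D) : ∃ m, ∀ a ∈ A, |a - m| ≤ D / 2 := by
  rcases A.eq_empty_or_nonempty with rfl | ⟨a₀, ha₀⟩
  · exact ⟨0, by simp⟩
  have hbdd : BddAbove A := ⟨a₀ + D, fun a ha => by linarith [(abs_le.1 (hD a ha a₀ ha₀)).2]⟩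
  have hbdd' : BddBelow A := ⟨a₀ - D, fun a ha => by linarith [(abs_le.1 (hD a₀ ha₀ a ha)).2]⟩
  have hwidth : sSup A ≤ sInf A + D := csSup_le ⟨a₀, ha₀⟩ fun b hb => by
    have : b - D ≤ sInf A :=
      le_csInf ⟨a₀, ha₀⟩ fun a ha => by linarith [(abs_le.1 (hD b hb a ha)).2]
    linarith
  refine ⟨(sSup A + sInf A) / 2, fun a ha => abs_le.2 ⟨?_, ?_⟩⟩ <;>
    linarith [le_csSup hbdd ha, csInf_le hbdd' ha]

theorem exists_int_abs_sub_mul_add_le {s : ℝ} (hs : 0 < s) (x φ : ℝ) :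
    ∃ k : ℤ, |x - (k * s + φ)| ≤ s / 2 := by
  refine ⟨round ((x - φ) / s), ?_⟩
  have hx : x - (round ((x - φ) / s) * s + φ) = ((x - φ) / s - round ((x - φ) / s)) * s := by
    field_simp
    ring
  rw [hx, abs_mul, abs_of_pos hs]
  nlinarith [abs_sub_round ((x - φ) / s)]

theorem exists_int_forall_abs_sub_lt {A : Set ℝ} {D s δ : ℝ} (φ : ℝ) (hs : 0 < s)
    (hD : ∀ a ∈ A, ∀ b ∈ A, |a - b| ≤ D) (hδ : D / 2 + s / 2 < δ) :
    ∃ k : ℤ, ∀ a ∈ A, |a - (k * s + φ)| < δ := by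
  obtain ⟨m, hm⟩ := exists_forall_abs_sub_le_half hD
  obtain ⟨k, hk⟩ := exists_int_abs_sub_mul_add_le hs m φ
  exact ⟨k, fun a ha => by linarith [abs_sub_le a m (k * s + φ), hm a ha]⟩

theorem sub_mem_Icc_of_abs_sub_lt {y s δ : ℝ} {a b : ℤ} {i : ℕ} (hs : 4 * δ ≤ 5 * s)
    (ha : |y - (a * s + i * (s / 2))| < δ) (hb : |y - (b * s + (i + 1 : ℕ) * (s / 2))| < δ) :
    b - a ∈ Icc (-2) 1 := by
  have hδ : 0 < δ := (abs_nonneg _).trans_lt ha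
  rw [abs_lt] at ha hb
  push_cast at hb
  have hlo : (-3 : ℝ) < b - a := by
    by_contra h
    nlinarith
  have hhi : (b : ℝ) - a < 2 := by
    by_contra h
    nlinarith
  have hlo' : (-3 : ℤ) < b - a := by exact_mod_cast hlo
  have hhi' : b - a < (2 : ℤ) := by exact_mod_cast hhi
  exact mem_Icc.2 ⟨by omega, by omega⟩

theorem abs_lt_of_abs_sub_mul_lt {y B s δ : ℝ} {k K : ℤ} (hs : 0 < s) (hy : |y| ≤ B)
    (hk : |y - k * s| < δ) (hK : B + δ ≤ K * s) : |k| < K := by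
  have : |(k : ℝ)| * s < K * s := by
    rw [← abs_of_pos hs, ← abs_mul, abs_of_pos hs]
    linarith [abs_sub_abs_le_abs_sub (k * s) y, abs_sub_comm y (k * s)]
  exact_mod_cast lt_of_mul_lt_mul_right this hs.le

theorem abs_sub_lt_add_of_le_add {s : Set ℝ} [s.OrdConnected] {f : s → ℝ} {w v δ η : ℝ}
    (hw₀ : 0 ≤ w) (hv₀ : 0 ≤ v) (hw : ∀ x y : s, |(x : ℝ) - y| ≤ w → |f x - f y| < δ)
    (hv : ∀ x y : s, |(x : ℝ) - y| ≤ v → |f x - f y| < η) (x y : s)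
    (hxy : |(x : ℝ) - y| ≤ w + v) : |f x - f y| < δ + η := by
  wlog hle : (x : ℝ) ≤ y generalizing x y
  · rw [abs_sub_comm]
    exact this y x (by rwa [abs_sub_comm]) (by linarith)
  rw [abs_sub_comm, abs_of_nonneg (sub_nonneg.2 hle)] at hxy
  have hz : max (x : ℝ) (y - v) ∈ s :=
    Set.OrdConnected.out ‹_› x.2 y.2 ⟨le_max_left _ _, max_le hle (by linarith)⟩
  have hxz : |(x : ℝ) - max (x : ℝ) (y - v)| ≤ w := by
    rw [abs_le]; constructor <;> cases max_cases (x : ℝ) (y - v) <;> linarith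
  have hzy : |max (x : ℝ) (y - v) - y| ≤ v := by
    rw [abs_le]; constructor <;> cases max_cases (x : ℝ) (y - v) <;> linarith
  calc |f x - f y| ≤ |f x - f ⟨_, hz⟩| + |f ⟨_, hz⟩ - f y| := abs_sub_le _ _ _
    _ < δ + η := add_lt_add (hw x ⟨_, hz⟩ hxz) (hv ⟨_, hz⟩ y hzy)

noncomputable def ramp (a ρ x : ℝ) : ℝ :=
  Set.projIcc (0 : ℝ) 1 zero_le_one ((x - a) / (2 * ρ) + 1 / 2)

theorem continuous_ramp (a ρ : ℝ) : Continuous (ramp a ρ) :=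
  continuous_subtype_val.comp (continuous_projIcc.comp (by fun_prop))

theorem ramp_nonneg (a ρ x : ℝ) : 0 ≤ ramp a ρ x := (Set.projIcc _ _ _ _).2.1

theorem ramp_le_one (a ρ x : ℝ) : ramp a ρ x ≤ 1 := (Set.projIcc _ _ _ _).2.2

theorem ramp_le_ramp {a b ρ : ℝ} (hρ : 0 < ρ) (hab : a ≤ b) (x : ℝ) :
    ramp b ρ x ≤ ramp a ρ x :=
  Set.monotone_projIcc _ (by gcongr : (x - b) / (2 * ρ) + 1 / 2 ≤ (x - a) / (2 * ρ) + 1 / 2)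

theorem sub_lt_of_ramp_pos {a ρ x : ℝ} (hρ : 0 < ρ) (h : 0 < ramp a ρ x) : a - ρ < x := by
  by_contra! hx
  have : (x - a) / (2 * ρ) + 1 / 2 ≤ 0 := by
    rw [div_add' _ _ _ (by positivity), div_nonpos_iff]
    right
    constructor <;> linarith
  rw [ramp, Set.projIcc_of_le_left _ this] at h
  exact h.false

theorem lt_add_of_ramp_lt_one {a ρ x : ℝ} (hρ : 0 < ρ) (h : ramp a ρ x < 1) : x < a + ρ := by
  by_contra! hx
  have : 1 ≤ (x - a) / (2 * ρ) + 1 / 2 := by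
    rw [← sub_le_iff_le_add, le_div_iff₀ (by positivity)]
    linarith
  rw [ramp, Set.projIcc_of_right_le _ this] at h
  exact h.false

noncomputable def cutoff (N : ℕ) (ρ : ℝ) (i : ℕ) (x : ℝ) : ℝ :=
  if i = 0 then 1 else if N ≤ i then 0 else ramp (i / N) ρ x

theorem continuous_cutoff (N : ℕ) (ρ : ℝ) (i : ℕ) : Continuous (cutoff N ρ i) := by
  unfold cutoff
  split_ifs
  exacts [continuous_const, continuous_const, continuous_ramp _ _]

theorem cutoff_nonneg (N : ℕ) (ρ : ℝ) (i : ℕ) (x : ℝ) : 0 ≤ cutoff N ρ i x := by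
  unfold cutoff
  split_ifs <;> simp [ramp_nonneg]

theorem cutoff_le_one (N : ℕ) (ρ : ℝ) (i : ℕ) (x : ℝ) : cutoff N ρ i x ≤ 1 := by
  unfold cutoff
  split_ifs <;> simp [ramp_le_one]

theorem antitone_cutoff {N : ℕ} {ρ : ℝ} (hρ : 0 < ρ) (x : ℝ) :
    Antitone fun i => cutoff N ρ i x := by
  refine antitone_nat_of_succ_le fun i => ?_
  rcases Nat.eq_zero_or_pos i with rfl | hi
  · simpa [cutoff] using cutoff_le_one N ρ 1 x
  by_cases hN : N ≤ i + 1
  · simp only [cutoff, Nat.add_one_ne_zero, hN, if_true, if_false]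
    exact cutoff_nonneg N ρ i x
  · simp only [cutoff, Nat.add_one_ne_zero, hi.ne', hN, (show ¬N ≤ i by omega), if_false]
    exact ramp_le_ramp hρ (by gcongr; simp) x

def window (N : ℕ) (ρ : ℝ) (i : ℕ) : Set ℝ := Set.Ioo (i / N - ρ) ((i + 1) / N + ρ)

theorem abs_sub_le_of_mem_window {N i : ℕ} {ρ x y : ℝ} (hx : x ∈ window N ρ i)
    (hy : y ∈ window N ρ i) : |x - y| ≤ 1 / N + 2 * ρ := by
  have hwidth : ((i : ℝ) + 1) / N = i / N + 1 / N := add_div _ _ _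
  rw [abs_le]
  constructor <;> linarith [hx.1, hx.2, hy.1, hy.2]

theorem div_mem_window {N i : ℕ} {ρ : ℝ} (hρ : 0 < ρ) : (i : ℝ) / N ∈ window N ρ i := by
  have : (i : ℝ) / N ≤ (i + 1) / N := by gcongr; linarith
  constructor <;> linarith

theorem succ_div_mem_window {N i : ℕ} {ρ : ℝ} (hρ : 0 < ρ) :
    ((i + 1 : ℕ) : ℝ) / N ∈ window N ρ i := by
  have : (i : ℝ) / N ≤ (i + 1) / N := by gcongr; linarith
  push_cast
  constructor <;> linarith

theorem mem_window_of_cutoff_lt {N i : ℕ} {ρ x : ℝ} (hρ : 0 < ρ) (hx : x ∈ Set.Icc (0 : ℝ) 1)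
    (hi : i < N) (h : cutoff N ρ (i + 1) x < cutoff N ρ i x) : x ∈ window N ρ i := by
  have hN : (0 : ℝ) < N := by exact_mod_cast hi.pos
  constructor
  · rcases Nat.eq_zero_or_pos i with rfl | hi0
    · simp only [CharP.cast_eq_zero, zero_div, zero_sub]
      linarith [hx.1]
    · have h' := (cutoff_nonneg N ρ (i + 1) x).trans_lt h
      simp only [cutoff, hi0.ne', hi.not_ge, if_false] at h'
      exact sub_lt_of_ramp_pos hρ h'
  · rcases (show i + 1 ≤ N from hi).eq_or_lt with hN' | hN'
    · rw [← Nat.cast_add_one, hN', div_self hN.ne']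
      linarith [hx.2]
    · have h' := h.trans_le (cutoff_le_one N ρ i x)
      simp only [cutoff, Nat.add_one_ne_zero, hN'.not_ge, if_false] at h'
      simpa using lt_add_of_ramp_lt_one hρ h'

noncomputable def smoothStep (N : ℕ) (ρ : ℝ) (c : ℕ → ℝ) : C(ℝ, ℝ) where
  toFun x := ∑ i ∈ range N, (cutoff N ρ i x - cutoff N ρ (i + 1) x) * c i
  continuous_toFun := continuous_finsetSum _ fun i _ =>
    ((continuous_cutoff N ρ i).sub (continuous_cutoff N ρ (i + 1))).mul continuous_const

theorem dist_smoothStep_restrict_lt {N : ℕ} (hN : N ≠ 0) {ρ δ : ℝ} (hρ : 0 < ρ) (hδ : 0 < δ)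
    {f : C(Set.Icc (0 : ℝ) 1, ℝ)} {c : ℕ → ℝ}
    (hc : ∀ i < N, ∀ x : Set.Icc (0 : ℝ) 1, (x : ℝ) ∈ window N ρ i → |f x - c i| < δ) :
    dist f ((smoothStep N ρ c).restrict (Set.Icc 0 1)) < δ := by
  refine (ContinuousMap.dist_lt_iff hδ).2 fun x => ?_
  rw [Real.dist_eq, ContinuousMap.restrict_apply]
  exact abs_sub_sum_lt_of_antitone (antitone_cutoff hρ x) (by simp [cutoff])
    (by simp [cutoff, hN]) fun i hi h => hc i hi x (mem_window_of_cutoff_lt hρ x.2 hi h)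

theorem exists_lattice_approx {N : ℕ} {ρ s δ : ℝ} (hρ : 0 < ρ) (hs : 0 < s)
    (hsδ : 8 * s < 7 * δ) {f : C(Set.Icc (0 : ℝ) 1, ℝ)}
    (hcoarse : ∀ x y : Set.Icc (0 : ℝ) 1, |(x : ℝ) - y| ≤ 1 / N → |f x - f y| < δ)
    (hfine : ∀ x y : Set.Icc (0 : ℝ) 1, |(x : ℝ) - y| ≤ 2 * ρ → |f x - f y| < δ / 8) :
    ∃ k : ℕ → ℤ, ∀ i, ∀ x : Set.Icc (0 : ℝ) 1, (x : ℝ) ∈ window N ρ i →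
      |f x - (k i * s + i * (s / 2))| < δ := by
  have hosc : ∀ i, ∀ a ∈ f '' {x | (x : ℝ) ∈ window N ρ i},
      ∀ b ∈ f '' {x | (x : ℝ) ∈ window N ρ i}, |a - b| ≤ δ + δ / 8 := by
    rintro i _ ⟨x, hx, rfl⟩ _ ⟨y, hy, rfl⟩
    exact (abs_sub_lt_add_of_le_add (by positivity) (by positivity) hcoarse hfine x y
      (abs_sub_le_of_mem_window hx hy)).le
  choose k hk using fun i : ℕ =>
    exists_int_forall_abs_sub_lt (δ := δ) (i * (s / 2)) hs (hosc i) (by linarith)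
  exact ⟨k, fun i x hx => hk i _ ⟨x, hx, rfl⟩⟩

def fromIncrements {m : ℕ} (k₀ : ℤ) (d : Fin m → ℤ) (i : ℕ) : ℤ :=
  k₀ + ∑ j ∈ range i, if h : j < m then d ⟨j, h⟩ else 0

theorem fromIncrements_sub (k : ℕ → ℤ) {m i : ℕ} (hi : i ≤ m) :
    fromIncrements (k 0) (fun j : Fin m => k (j + 1) - k j) i = k i := by
  rw [fromIncrements, sum_congr rfl fun j hj =>
    (dif_pos ((mem_range.1 hj).trans_le hi) : _ = k (j + 1) - k j), sum_range_sub]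
  ring

open scoped Classical in
noncomputable def coverCenters (N : ℕ) (ρ s : ℝ) (K₀ : ℕ) : Finset C(Set.Icc (0 : ℝ) 1, ℝ) :=
  (Icc (-(K₀ : ℤ)) K₀ ×ˢ Fintype.piFinset fun _ : Fin (N - 1) => Icc (-2 : ℤ) 1).image fun p =>
    (smoothStep N ρ fun i => fromIncrements p.1 p.2 i * s + i * (s / 2)).restrict (Set.Icc 0 1)

theorem card_coverCenters_le (N : ℕ) (ρ s : ℝ) (K₀ : ℕ) :
    (coverCenters N ρ s K₀).card ≤ (2 * K₀ + 1) * 4 ^ (N - 1) := by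
  classical
  refine card_image_le.trans_eq ?_
  rw [card_product, Int.card_Icc, Fintype.card_piFinset, prod_const, Int.card_Icc, card_univ,
    Fintype.card_fin]
  congr 1
  omega

theorem exists_mem_coverCenters_dist_lt {N K₀ : ℕ} {ρ s δ B : ℝ} (hN : N ≠ 0) (hρ : 0 < ρ)
    (hs : 0 < s) (hsδ : 8 * s < 7 * δ) (hδs : 4 * δ ≤ 5 * s) (hK₀ : B + δ ≤ K₀ * s)
    {f : C(Set.Icc (0 : ℝ) 1, ℝ)} (hB : ∀ x, |f x| ≤ B)
    (hcoarse : ∀ x y : Set.Icc (0 : ℝ) 1, |(x : ℝ) - y| ≤ 1 / N → |f x - f y| < δ)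
    (hfine : ∀ x y : Set.Icc (0 : ℝ) 1, |(x : ℝ) - y| ≤ 2 * ρ → |f x - f y| < δ / 8) :
    ∃ g ∈ coverCenters N ρ s K₀, dist f g < δ := by
  classical
  obtain ⟨k, hk⟩ := exists_lattice_approx hρ hs hsδ hcoarse hfine
  have node : ∀ j ≤ N, (j : ℝ) / N ∈ Set.Icc (0 : ℝ) 1 := fun j hj =>
    ⟨by positivity, div_le_one_of_le₀ (by exact_mod_cast hj) (Nat.cast_nonneg _)⟩
  have hstart : |k 0| < K₀ :=
    abs_lt_of_abs_sub_mul_lt hs (hB _)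
      (by simpa using hk 0 ⟨_, node 0 (Nat.zero_le _)⟩ (div_mem_window hρ))
      (by exact_mod_cast hK₀)
  have hstep : ∀ j : Fin (N - 1), k (j + 1) - k j ∈ Icc (-2) 1 := fun j =>
    have hj : (j : ℕ) + 1 ≤ N := by omega
    sub_mem_Icc_of_abs_sub_lt hδs (hk j ⟨_, node _ hj⟩ (succ_div_mem_window hρ))
      (hk (j + 1) ⟨_, node _ hj⟩ (div_mem_window hρ))
  unfold coverCenters
  refine ⟨_, mem_image_of_mem _ (a := (k 0, fun j : Fin (N - 1) => k (j + 1) - k j))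
    (mem_product.2 ⟨?_, Fintype.mem_piFinset.2 hstep⟩),
    dist_smoothStep_restrict_lt hN hρ (by linarith) fun i hi x hx => ?_⟩
  · rw [abs_lt] at hstart
    exact mem_Icc.2 ⟨hstart.1.le, hstart.2.le⟩
  · rw [fromIncrements_sub k (by omega : i ≤ N - 1)]
    exact hk i x hx

theorem two_mul_pow_add_one_mul_four_pow_le (m n C : ℕ) :
    (2 * 2 ^ (n + C + 2) + 1) * 4 ^ (2 ^ m - 1) ≤ 2 ^ (2 ^ (m + 1) + n + C + 2) := by
  have h4 : 4 ^ (2 ^ m - 1) = 2 ^ (2 ^ (m + 1) - 2) := by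
    rw [show 4 = 2 ^ 2 by rfl, ← pow_mul, pow_succ]
    congr 1
    omega
  have hm : 2 ≤ 2 ^ (m + 1) := by
    rw [pow_succ]
    linarith [Nat.one_le_two_pow (n := m)]
  calc (2 * 2 ^ (n + C + 2) + 1) * 4 ^ (2 ^ m - 1)
      ≤ 2 ^ (n + C + 2) * 2 ^ 2 * 2 ^ (2 ^ (m + 1) - 2) := by
        rw [h4]
        gcongr
        linarith [Nat.one_le_two_pow (n := n + C + 2)]
    _ = 2 ^ (2 ^ (m + 1) + n + C + 2) := by
        rw [← pow_add, ← pow_add]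
        congr 1
        omega

theorem two_pow_add_zpow_neg_le (n C : ℕ) :
    (2 : ℝ) ^ C + 2 ^ (-(n : ℤ)) ≤ ((2 ^ (n + C + 2) : ℕ) : ℝ) * (4 * 2 ^ (-(n : ℤ)) / 5) := by
  have hn : (2 : ℝ) ^ (-(n : ℤ)) * 2 ^ n = 1 := by
    rw [zpow_neg, zpow_natCast, inv_mul_cancel₀ (by positivity)]
  have hn1 : (2 : ℝ) ^ (-(n : ℤ)) ≤ 1 := zpow_le_one_of_nonpos₀ one_le_two (by simp)
  have hC : (1 : ℝ) ≤ 2 ^ C := one_le_pow₀ one_le_two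
  push_cast
  rw [pow_add, pow_add]
  nlinarith

end SupNormCover

open SupNormCover

theorem stmt15_general (l : ℕ → ℕ) (C : ℕ)
    (K : Set C(Set.Icc (0:ℝ) 1, ℝ))
    (hK : K = {f : C(Set.Icc (0:ℝ) 1, ℝ) | (∀ x, |f x| ≤ 2 ^ C) ∧
      ∀ k : ℕ, ∀ x y : Set.Icc (0:ℝ) 1,
        |(x : ℝ) - (y : ℝ)| ≤ (2:ℝ) ^ (-(l k : ℤ)) → |f x - f y| < (2:ℝ) ^ (-(k : ℤ))}) :
    ∀ n : ℕ, ∃ t : Finset C(Set.Icc (0:ℝ) 1, ℝ),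
      t.card ≤ 2 ^ (2 ^ (l n + 1) + n + C + 2) ∧
      K ⊆ ⋃ g ∈ t, Metric.ball g ((2:ℝ) ^ (-(n : ℤ))) := by
  intro n
  set δ : ℝ := 2 ^ (-(n : ℤ)) with hδ
  set ρ : ℝ := 2 ^ (-(l (n + 3) : ℤ)) / 2
  refine ⟨coverCenters (2 ^ l n) ρ (4 * δ / 5) (2 ^ (n + C + 2)),
    (card_coverCenters_le _ _ _ _).trans (two_mul_pow_add_one_mul_four_pow_le _ _ _), ?_⟩
  rintro f hf
  rw [hK] at hf
  have hcoarse : (1 : ℝ) / ((2 ^ l n : ℕ) : ℝ) = 2 ^ (-(l n : ℤ)) := by simp [zpow_neg]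
  have hfine : (2 : ℝ) ^ (-((n + 3 : ℕ) : ℤ)) = δ / 8 := by
    rw [hδ, Nat.cast_add, neg_add, zpow_add₀ two_ne_zero, div_eq_mul_inv]
    norm_num
  have hδ0 : 0 < δ := by positivity
  obtain ⟨g, hg, hfg⟩ := exists_mem_coverCenters_dist_lt (N := 2 ^ l n) (ρ := ρ)
    (by positivity) (by positivity) (by positivity) (by linarith) (by linarith)
    (two_pow_add_zpow_neg_le n C) hf.1
    (fun x y hxy => hf.2 n x y (hcoarse ▸ hxy))
    (fun x y hxy => hfine ▸ hf.2 (n + 3) x y (by rwa [mul_div_cancel₀ _ two_ne_zero] at hxy))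
  exact Set.mem_iUnion₂.2 ⟨g, hg, hfg⟩

/-- Upper bound in the quantitative Arzelà–Ascoli theorem: the set K^∞_{l,C} of
continuous functions on [0,1] bounded by 2^C with modulus of continuity l can be
covered by at most 2^{2^{l(n)+1} + n + C + 2} balls of radius 2^{-n}. -/
theorem stmt15 (l : ℕ → ℕ) (hl : ∀ n, l n ≠ 0 → l n < l (n + 1)) (C : ℕ)
    (K : Set C(Set.Icc (0:ℝ) 1, ℝ))
    (hK : K = {f : C(Set.Icc (0:ℝ) 1, ℝ) | (∀ x, |f x| ≤ 2 ^ C) ∧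
      ∀ k : ℕ, ∀ x y : Set.Icc (0:ℝ) 1,
        |(x : ℝ) - (y : ℝ)| ≤ (2:ℝ) ^ (-(l k : ℤ)) → |f x - f y| < (2:ℝ) ^ (-(k : ℤ))}) :
    ∀ n : ℕ, ∃ t : Finset C(Set.Icc (0:ℝ) 1, ℝ),
      t.card ≤ 2 ^ (2 ^ (l n + 1) + n + C + 2) ∧
      K ⊆ ⋃ g ∈ t, Metric.ball g ((2:ℝ) ^ (-(n : ℤ))) :=
  stmt15_general l C K hK
end
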